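/- Let β = log 2/(2 log 3), where log denotes the natural logarithm. If k ≥ 1 and n is a natural number with 2^{k−1} < n ≤ 2^k, then β·(k − 2) ≤ S(n)/n ≤ k (as inequalities of real numbers). -/

import Mathlib

/-- The height function: H(1) = 0 and H(n) = H(φ(n)) + 1 for n ≥ 2. -/
def H : ℕ → ℕ
  | 0 => 0
  | 1 => 0
  | n + 2 => H (Nat.totient (n + 2)) + 1
  decreasing_by exact Nat.totient_lt _ (by omega)

/-- The sum-of-heights function S(n) = ∑_{k=1}^n H(k). -/
def S (n : ℕ) : ℕ := ∑ k ∈ Finset.Icc 1 n, H k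

/-!
Upper bound: for even `m > 2` the totient `φ m` is even and at most `m / 2`, so `2 ^ H m ≤ m`
for even `m`, and hence `H m ≤ k` whenever `m ≤ 2 ^ k`.

Lower bound: `m ≤ 3 ^ H m`. For odd `u ≥ 3` write `φ u = 2 ^ b * w` with `w` odd. Each of the
`ω(u)` prime factors of `u` is odd and contributes a factor `2` to `φ u`, so `ω(u) ≤ b`, while
`u / φ u = ∏ p / (p - 1) ≤ (3 / 2) ^ ω(u)`; thus `u ≤ 3 ^ b * w`. As
`H (2 ^ b * w) = b - 1 + H w` for odd `w ≥ 3`, strong induction gives `3 * u ≤ 3 ^ H u`.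
Every `m` in `(n / 2, n]` exceeds `2 ^ (k - 2)`, so `H m ≥ (k - 2) log 2 / log 3`, and these
`m` alone give the lower bound on `S n`.
-/

open Finset
open scoped Nat

lemma H_zero : H 0 = 0 := by rw [H]

lemma H_one : H 1 = 0 := by rw [H]

lemma H_of_two_le {n : ℕ} (hn : 2 ≤ n) : H n = H (φ n) + 1 := by
  obtain ⟨m, rfl⟩ := Nat.exists_eq_add_of_le' hn
  rw [H]

lemma H_two : H 2 = 1 := by rw [H_of_two_le le_rfl, Nat.totient_two, H_one]

lemma H_two_mul_of_even {x : ℕ} (hx : Even x) (hx0 : x ≠ 0) : H (2 * x) = H x + 1 := by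
  induction x using Nat.strong_induction_on with
  | _ x ih =>
  rw [H_of_two_le (by omega), Nat.totient_two_mul_of_even hx]
  obtain rfl | hx2 : x = 2 ∨ 2 < x := by obtain ⟨y, rfl⟩ := hx; omega
  · rw [Nat.totient_two, mul_one]
  · rw [ih _ (Nat.totient_lt x (by omega)) (Nat.totient_even hx2)
      (Nat.totient_pos.mpr (by omega)).ne', ← H_of_two_le hx2.le]

lemma H_two_mul_of_odd {w : ℕ} (hw : Odd w) (hw3 : 3 ≤ w) : H (2 * w) = H w := by
  rw [H_of_two_le (by omega), Nat.totient_two_mul_of_odd hw, ← H_of_two_le (by omega)]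

lemma H_two_pow (b : ℕ) : H (2 ^ b) = b := by
  induction b with
  | zero => exact H_one
  | succ b ih =>
    rcases b.eq_zero_or_pos with rfl | hb
    · exact H_two
    rw [pow_succ', H_two_mul_of_even (Nat.even_pow.mpr ⟨even_two, hb.ne'⟩) (by positivity), ih]

lemma H_two_pow_succ_mul_of_odd (b : ℕ) {w : ℕ} (hw : Odd w) (hw3 : 3 ≤ w) :
    H (2 ^ (b + 1) * w) = b + H w := by
  induction b with
  | zero => simpa using H_two_mul_of_odd hw hw3
  | succ b ih =>
    have hpos : 2 ^ (b + 1) * w ≠ 0 := (Nat.mul_pos (by positivity) (by omega)).ne'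
    rw [pow_succ', mul_assoc, H_two_mul_of_even (Nat.even_mul.mpr (.inl (Nat.even_pow.mpr
      ⟨even_two, by omega⟩))) hpos, ih]
    omega

lemma totient_two_mul_le (x : ℕ) : φ (2 * x) ≤ x := by
  induction x using Nat.strong_induction_on with
  | _ x ih =>
  rcases Nat.even_or_odd x with hx | hx
  · obtain ⟨y, rfl⟩ := hx.two_dvd
    rcases y.eq_zero_or_pos with rfl | hy
    · simp
    have := ih y (by omega)
    rw [Nat.totient_two_mul_of_even hx]
    omega
  · rw [Nat.totient_two_mul_of_odd hx]
    exact Nat.totient_le x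

lemma two_pow_H_le_of_even {m : ℕ} (hm : Even m) (hm0 : m ≠ 0) : 2 ^ H m ≤ m := by
  induction m using Nat.strong_induction_on with
  | _ m ih =>
  obtain rfl | hm2 : m = 2 ∨ 2 < m := by obtain ⟨x, rfl⟩ := hm; omega
  · simp [H_two]
  calc 2 ^ H m = 2 * 2 ^ H (φ m) := by rw [H_of_two_le hm2.le, pow_succ']
    _ ≤ 2 * φ m := by
      gcongr
      exact ih _ (Nat.totient_lt m (by omega)) (Nat.totient_even hm2)
        (Nat.totient_pos.mpr (by omega)).ne'
    _ ≤ m := by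
      obtain ⟨x, rfl⟩ := hm.two_dvd
      have := totient_two_mul_le x
      omega

lemma two_pow_H_lt_of_odd {m : ℕ} (hm : Odd m) : 2 ^ H m < 2 * m := by
  obtain rfl | hm3 : m = 1 ∨ 3 ≤ m := by obtain ⟨t, rfl⟩ := hm; omega
  · simp [H_one]
  calc 2 ^ H m = 2 * 2 ^ H (φ m) := by rw [H_of_two_le (by omega), pow_succ']
    _ ≤ 2 * φ m := by
      gcongr
      exact two_pow_H_le_of_even (Nat.totient_even (by omega)) (Nat.totient_pos.mpr (by omega)).ne'
    _ < 2 * m := by gcongr; exact Nat.totient_lt m (by omega)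

lemma H_le_of_le_two_pow {m k : ℕ} (hm : m ≤ 2 ^ k) : H m ≤ k := by
  rcases Nat.even_or_odd m with he | ho
  · rcases eq_or_ne m 0 with rfl | hm0
    · simp [H_zero]
    exact (Nat.pow_le_pow_iff_right (by norm_num)).mp ((two_pow_H_le_of_even he hm0).trans hm)
  · have : 2 ^ H m < 2 ^ (k + 1) := by
      rw [pow_succ']
      exact (two_pow_H_lt_of_odd ho).trans_le (by omega)
    exact Nat.lt_succ_iff.mp ((Nat.pow_lt_pow_iff_right (by norm_num)).mp this)

lemma two_pow_dvd_totient_of_odd {u : ℕ} (hu : Odd u) : 2 ^ #u.primeFactors ∣ φ u := by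
  have hp : ∀ p ∈ u.primeFactors, 2 ∣ p - 1 := fun p hp =>
    (Nat.Odd.sub_odd (hu.of_dvd_nat (Nat.dvd_of_mem_primeFactors hp)) odd_one).two_dvd
  calc 2 ^ #u.primeFactors = ∏ _p ∈ u.primeFactors, 2 := (prod_const 2).symm
    _ ∣ ∏ p ∈ u.primeFactors, (p - 1) := prod_dvd_prod_of_dvd _ _ hp
    _ ∣ φ u := by rw [Nat.totient_eq_div_primeFactors_mul]; exact dvd_mul_left _ _

lemma two_pow_mul_le_three_pow_mul_totient_of_odd {u : ℕ} (hu : Odd u) :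
    2 ^ #u.primeFactors * u ≤ 3 ^ #u.primeFactors * φ u := by
  have hp : ∀ p ∈ u.primeFactors, 2 * p ≤ 3 * (p - 1) := fun p hp => by
    have := (Nat.prime_of_mem_primeFactors hp).two_le
    obtain ⟨t, rfl⟩ := hu.of_dvd_nat (Nat.dvd_of_mem_primeFactors hp)
    omega
  refine Nat.le_of_mul_le_mul_right ?_
    (prod_pos (s := u.primeFactors) fun p hp => Nat.pos_of_mem_primeFactors hp)
  calc 2 ^ #u.primeFactors * u * ∏ p ∈ u.primeFactors, p
      = u * ∏ p ∈ u.primeFactors, 2 * p := by rw [prod_mul_distrib, prod_const]; ring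
    _ ≤ u * ∏ p ∈ u.primeFactors, 3 * (p - 1) := Nat.mul_le_mul_left u (prod_le_prod' hp)
    _ = 3 ^ #u.primeFactors * (u * ∏ p ∈ u.primeFactors, (p - 1)) := by
      rw [prod_mul_distrib, prod_const]; ring
    _ = 3 ^ #u.primeFactors * φ u * ∏ p ∈ u.primeFactors, p := by
      rw [← Nat.totient_mul_prod_primeFactors]; ring

lemma three_mul_le_three_pow_H_of_odd {u : ℕ} (hu : Odd u) (hu3 : 3 ≤ u) :
    3 * u ≤ 3 ^ H u := by
  induction u using Nat.strong_induction_on with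
  | _ u ih =>
  have hφ0 : φ u ≠ 0 := (Nat.totient_pos.mpr (by omega)).ne'
  obtain ⟨b, w, hw, hφ⟩ := Nat.exists_eq_two_pow_mul_odd hφ0
  have hrb : #u.primeFactors ≤ b := by
    have hdvd : 2 ^ #u.primeFactors ∣ 2 ^ b * w := hφ ▸ two_pow_dvd_totient_of_odd hu
    exact (Nat.pow_dvd_pow_iff_le_right (by norm_num)).mp
      ((Nat.Coprime.pow_left _ (Nat.coprime_two_left.mpr hw)).dvd_of_dvd_mul_right hdvd)
  have hu_le : u ≤ 3 ^ b * w := by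
    refine Nat.le_of_mul_le_mul_left ?_ (by positivity : 0 < 2 ^ b)
    calc 2 ^ b * u = 2 ^ (b - #u.primeFactors) * (2 ^ #u.primeFactors * u) := by
          rw [← mul_assoc, ← pow_add, Nat.sub_add_cancel hrb]
      _ ≤ 3 ^ (b - #u.primeFactors) * (3 ^ #u.primeFactors * φ u) :=
          Nat.mul_le_mul (Nat.pow_le_pow_left (by norm_num) _)
            (two_pow_mul_le_three_pow_mul_totient_of_odd hu)
      _ = 2 ^ b * (3 ^ b * w) := by
          rw [hφ, ← mul_assoc, ← pow_add, Nat.sub_add_cancel hrb]; ring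
  obtain ⟨c, rfl⟩ : ∃ c, b = c + 1 := Nat.exists_eq_succ_of_ne_zero <| by
    rintro rfl
    rw [pow_zero, one_mul] at hφ
    exact (Nat.not_even_iff_odd.mpr hw) (hφ ▸ Nat.totient_even (by omega))
  rw [H_of_two_le (by omega), hφ]
  obtain rfl | hw3 : w = 1 ∨ 3 ≤ w := by obtain ⟨t, rfl⟩ := hw; omega
  · rw [mul_one, H_two_pow, pow_succ _ (c + 1)]
    omega
  have hwu : w < u := calc
    w ≤ 2 ^ (c + 1) * w := Nat.le_mul_of_pos_left w (by positivity)
    _ = φ u := hφ.symm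
    _ < u := Nat.totient_lt u (by omega)
  rw [H_two_pow_succ_mul_of_odd c hw hw3]
  calc 3 * u ≤ 3 ^ (c + 1) * (3 * w) := by rw [mul_left_comm]; gcongr
    _ ≤ 3 ^ (c + 1) * 3 ^ H w := by gcongr; exact ih w hwu hw hw3
    _ = 3 ^ (c + H w + 1) := by ring

lemma le_three_pow_H {m : ℕ} (hm : m ≠ 0) : m ≤ 3 ^ H m := by
  obtain ⟨a, u, hu, rfl⟩ := Nat.exists_eq_two_pow_mul_odd hm
  obtain rfl | hu3 : u = 1 ∨ 3 ≤ u := by obtain ⟨t, rfl⟩ := hu; omega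
  · rw [mul_one, H_two_pow]
    exact Nat.pow_le_pow_left (by norm_num) a
  have hu_le := three_mul_le_three_pow_H_of_odd hu hu3
  rcases a with _ | c
  · rw [pow_zero, one_mul]
    omega
  rw [H_two_pow_succ_mul_of_odd c hu hu3]
  calc 2 ^ (c + 1) * u ≤ 3 ^ (c + 1) * u := by gcongr; norm_num
    _ = 3 ^ c * (3 * u) := by ring
    _ ≤ 3 ^ c * 3 ^ H u := by gcongr
    _ = 3 ^ (c + H u) := (pow_add _ _ _).symm

lemma S_le_mul_of_le_two_pow {n k : ℕ} (hn : n ≤ 2 ^ k) : S n ≤ n * k :=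
  calc S n ≤ ∑ _m ∈ Icc 1 n, k :=
        sum_le_sum fun m hm => H_le_of_le_two_pow ((mem_Icc.mp hm).2.trans hn)
    _ = n * k := by simp

lemma mul_log_two_le_log_three_mul_H {j m : ℕ} (hm : 2 ^ j < m) :
    j * Real.log 2 ≤ H m * Real.log 3 := by
  have hm3 : (m : ℝ) ≤ 3 ^ H m := by exact_mod_cast le_three_pow_H (pos_of_gt hm).ne'
  have hm2 : (2 : ℝ) ^ j ≤ m := by exact_mod_cast hm.le
  rw [← Real.log_pow, ← Real.log_pow]
  exact Real.log_le_log (by positivity) (hm2.trans hm3)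

lemma mul_log_two_le_two_mul_log_three_mul_S {j n : ℕ} (hn : 2 ^ (j + 1) < n) :
    j * Real.log 2 * n ≤ 2 * Real.log 3 * S n := by
  have hH : ∀ m ∈ Ioc (n / 2) n, j * Real.log 2 ≤ H m * Real.log 3 := fun m hm => by
    refine mul_log_two_le_log_three_mul_H ?_
    rw [pow_succ] at hn
    have := (mem_Ioc.mp hm).1
    omega
  have hsum : ∑ m ∈ Ioc (n / 2) n, H m ≤ S n :=
    sum_le_sum_of_subset fun m hm => by simp only [mem_Ioc, mem_Icc] at hm ⊢; omega
  have hcard : n ≤ 2 * #(Ioc (n / 2) n) := by rw [Nat.card_Ioc]; omega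
  calc j * Real.log 2 * n ≤ j * Real.log 2 * (2 * #(Ioc (n / 2) n) : ℕ) := by gcongr
    _ = 2 * ∑ _m ∈ Ioc (n / 2) n, j * Real.log 2 := by
        rw [sum_const, nsmul_eq_mul]; push_cast; ring
    _ ≤ 2 * ∑ m ∈ Ioc (n / 2) n, H m * Real.log 3 := by grw [sum_le_sum hH]
    _ = 2 * Real.log 3 * (∑ m ∈ Ioc (n / 2) n, H m : ℕ) := by
        rw [← sum_mul]; push_cast; ring
    _ ≤ 2 * Real.log 3 * S n := by gcongr

theorem sum_heights_over_n_bounds_general (k n : ℕ)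
    (h1 : 2 ^ (k - 1) < n) (h2 : n ≤ 2 ^ k) :
    Real.log 2 / (2 * Real.log 3) * ((k : ℝ) - 2) ≤ (S n : ℝ) / (n : ℝ) ∧
    (S n : ℝ) / (n : ℝ) ≤ (k : ℝ) := by
  have hn : (0 : ℝ) < n := by exact_mod_cast (Nat.zero_le _).trans_lt h1
  have hlog3 : 0 < Real.log 3 := Real.log_pos (by norm_num)
  refine ⟨?_, ?_⟩
  · rw [le_div_iff₀ hn]
    obtain hk | ⟨j, rfl⟩ : k < 2 ∨ ∃ j, k = j + 2 :=
      (lt_or_ge k 2).imp_right fun hk => ⟨k - 2, by omega⟩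
    · have hk' : (k : ℝ) ≤ 1 := by exact_mod_cast Nat.lt_succ_iff.mp hk
      have : Real.log 2 / (2 * Real.log 3) * ((k : ℝ) - 2) ≤ 0 :=
        mul_nonpos_of_nonneg_of_nonpos (by positivity) (by linarith)
      exact (mul_nonpos_of_nonpos_of_nonneg this hn.le).trans (Nat.cast_nonneg _)
    · have := mul_log_two_le_two_mul_log_three_mul_S (j := j) h1
      rw [div_mul_eq_mul_div, div_mul_eq_mul_div, div_le_iff₀ (by positivity)]
      push_cast
      linarith
  · rw [div_le_iff₀ hn]
    exact_mod_cast (S_le_mul_of_le_two_pow h2).trans_eq (mul_comm _ _)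

theorem sum_heights_over_n_bounds (k n : ℕ) (hk : 1 ≤ k)
    (h1 : 2 ^ (k - 1) < n) (h2 : n ≤ 2 ^ k) :
    Real.log 2 / (2 * Real.log 3) * ((k : ℝ) - 2) ≤ (S n : ℝ) / (n : ℝ) ∧
    (S n : ℝ) / (n : ℝ) ≤ (k : ℝ) :=
  sum_heights_over_n_bounds_general k n h1 h2
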